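/- Let n ≥ 1 and let x = (J_n, u, e_1ᵗ) where J_n is the n×n nilpotent Jordan block, u = (y_1,…,y_n)ᵗ with y_n ≠ 0, and e_1ᵗ = (1,0,…,0) is a row vector. Then the stabilizer of x in GL_n(𝔽) under the action g·(X,u,v) = (gXg⁻¹, gu, vg⁻¹) is trivial. -/

import Mathlib

open Matrix

/-- The `n×n` nilpotent Jordan block, with `1`'s on the superdiagonal. -/
def Jmat (𝔽 : Type*) [Field 𝔽] (n : ℕ) : Matrix (Fin n) (Fin n) 𝔽 :=
  Matrix.of fun i j => if (i : ℕ) + 1 = (j : ℕ) then 1 else 0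

lemma single_vecMul' {𝔽 : Type*} [Field 𝔽] {n : ℕ} (i : Fin n)
    (M : Matrix (Fin n) (Fin n) 𝔽) : (Pi.single i (1 : 𝔽)) ᵥ* M = M i := by
  funext j
  simp [Matrix.vecMul, dotProduct, Pi.single_apply]

lemma e1_vecMul_Jpow {𝔽 : Type*} [Field 𝔽] {n : ℕ} (hn : 0 < n)
    (k : ℕ) (hk : k < n) :
    (Pi.single (⟨0, hn⟩ : Fin n) (1 : 𝔽)) ᵥ* (Jmat 𝔽 n) ^ k
      = Pi.single (⟨k, hk⟩ : Fin n) (1 : 𝔽) := by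
  induction k with
  | zero => simp
  | succ m ih =>
    rw [pow_succ, ← Matrix.vecMul_vecMul, ih (by omega), single_vecMul']
    funext j
    simp [Jmat, Pi.single_apply, Fin.ext_iff, eq_comm]

/-- the stabilizer of `x = (J_n, u, e₁ᵗ)` (with `u = (y₁,…,yₙ)ᵗ`, `yₙ ≠ 0`)
in `GL_n(𝔽)` acting by `g·(X,u,v) = (gXg⁻¹, gu, vg⁻¹)` is trivial. -/
theorem stmt1 {𝔽 : Type*} [Field 𝔽] [IsAlgClosed 𝔽] [CharZero 𝔽]
    {n : ℕ} (hn : 0 < n) (y : Fin n → 𝔽) (hyn : y ⟨n - 1, by omega⟩ ≠ 0)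
    (g : Matrix.GeneralLinearGroup (Fin n) 𝔽)
    (h1 : (g : Matrix (Fin n) (Fin n) 𝔽) * Jmat 𝔽 n *
        ((g⁻¹ : Matrix.GeneralLinearGroup (Fin n) 𝔽) : Matrix (Fin n) (Fin n) 𝔽) = Jmat 𝔽 n)
    (h2 : (g : Matrix (Fin n) (Fin n) 𝔽) *ᵥ y = y)
    (h3 : (Pi.single (⟨0, hn⟩ : Fin n) (1 : 𝔽)) ᵥ*
        ((g⁻¹ : Matrix.GeneralLinearGroup (Fin n) 𝔽) : Matrix (Fin n) (Fin n) 𝔽)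
        = Pi.single (⟨0, hn⟩ : Fin n) (1 : 𝔽)) :
    g = 1 := by
  set G : Matrix (Fin n) (Fin n) 𝔽 := (g : Matrix (Fin n) (Fin n) 𝔽) with hG
  have hinv : ((g⁻¹ : Matrix.GeneralLinearGroup (Fin n) 𝔽) : Matrix (Fin n) (Fin n) 𝔽) * G = 1 := by
    rw [hG, ← Units.val_mul, inv_mul_cancel, Units.val_one]
  -- g commutes with J
  have hcomm : G * Jmat 𝔽 n = Jmat 𝔽 n * G := by
    have := congrArg (fun M => M * G) h1
    rw [Matrix.mul_assoc (G * Jmat 𝔽 n), hinv, Matrix.mul_one] at this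
    exact this
  -- e1 * g = e1
  have he1 : (Pi.single (⟨0, hn⟩ : Fin n) (1 : 𝔽)) ᵥ* G
      = Pi.single (⟨0, hn⟩ : Fin n) (1 : 𝔽) := by
    have := congrArg (fun v => v ᵥ* G) h3
    rw [Matrix.vecMul_vecMul, hinv, Matrix.vecMul_one] at this
    exact this.symm
  have hcommpow : ∀ k : ℕ, G * (Jmat 𝔽 n) ^ k = (Jmat 𝔽 n) ^ k * G := by
    intro k
    induction k with
    | zero => simp
    | succ m ih =>
      rw [pow_succ, ← Matrix.mul_assoc, ih, Matrix.mul_assoc, hcomm, ← Matrix.mul_assoc]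
  have key : G = 1 := by
    funext i j
    have hi : (Pi.single i (1 : 𝔽)) ᵥ* G = Pi.single i (1 : 𝔽) := by
      have h4 : (Pi.single (⟨0, hn⟩ : Fin n) (1 : 𝔽)) ᵥ* ((Jmat 𝔽 n) ^ (i : ℕ) * G)
          = Pi.single (⟨0, hn⟩ : Fin n) (1 : 𝔽) ᵥ* (Jmat 𝔽 n) ^ (i : ℕ) := by
        rw [← hcommpow, ← Matrix.vecMul_vecMul, he1]
      rw [← Matrix.vecMul_vecMul, e1_vecMul_Jpow hn _ i.isLt] at h4
      simpa using h4
    have := congrFun hi j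
    rw [single_vecMul'] at this
    rw [this]
    simp [Matrix.one_apply, Pi.single_apply, eq_comm]
  ext i j
  rw [hG] at key
  simp [key, Matrix.one_apply]
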